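/- Under the mountain pass geometry hypotheses (Ω bounded smooth star-shaped, f satisfying (f₁), c in the admissible range), the mountain pass levels m_τ = inf_{γ∈Γ} sup_{t∈[0,1]} E_τ(γ(t)) satisfy lim_{τ→1⁻} m_τ = m₁. -/

import Mathlib

open MeasureTheory Set Filter

noncomputable section

/-- Euclidean space `ℝ^N`. -/
abbrev Euc (N : ℕ) := EuclideanSpace ℝ (Fin N)

variable {N : ℕ}

/-- The Laplacian of a function `u : ℝ^N → ℝ`. -/
def lap (u : Euc N → ℝ) (x : Euc N) : ℝ :=
  ∑ i : Fin N, fderiv ℝ (fun y => gradient u y i) x (EuclideanSpace.single i 1)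

/-- Membership in `H¹₀(Ω)`: square-integrable with square-integrable gradient,
vanishing outside `Ω`. -/
structure MemH01 (Ω : Set (Euc N)) (u : Euc N → ℝ) : Prop where
  zero_outside : ∀ x ∉ Ω, u x = 0
  memL2 : MemLp u 2 (volume.restrict Ω)
  gradL2 : MemLp (fun x => ‖gradient u x‖) 2 (volume.restrict Ω)

/-- positive part `u⁺ = max(u,0)` -/
def pPart (u : Euc N → ℝ) : Euc N → ℝ := fun x => max (u x) 0

/-- `S_c⁺ = {u ∈ H¹₀(Ω) : ∫_Ω |u⁺|² = c}` -/
def ScPlus (Ω : Set (Euc N)) (c : ℝ) : Set (Euc N → ℝ) :=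
  {u | MemH01 Ω u ∧ ∫ x in Ω, (pPart u x) ^ 2 = c}

/-- `S_c = {u ∈ H¹₀(Ω) : ∫_Ω u² = c}` -/
def Sc (Ω : Set (Euc N)) (c : ℝ) : Set (Euc N → ℝ) :=
  {u | MemH01 Ω u ∧ ∫ x in Ω, (u x) ^ 2 = c}

/-- `∫_Ω |∇u|²` -/
def gradSq (Ω : Set (Euc N)) (u : Euc N → ℝ) : ℝ := ∫ x in Ω, ‖gradient u x‖ ^ 2

/-- `F(t) = ∫₀ᵗ f(s) ds` -/
def primitive (f : ℝ → ℝ) (t : ℝ) : ℝ := ∫ s in (0:ℝ)..t, f s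

/-- `f₊(t) = f(t)` for `t ≥ 0`, `0` otherwise. -/
def fplus (f : ℝ → ℝ) : ℝ → ℝ := fun t => if 0 ≤ t then f t else 0

/-- `E(u) = ½∫|∇u|² − ∫ F₊(u)` -/
def energyPlus (Ω : Set (Euc N)) (f : ℝ → ℝ) (u : Euc N → ℝ) : ℝ :=
  (1/2) * gradSq Ω u - ∫ x in Ω, primitive (fplus f) (u x)

/-- `E_τ(u) = ½∫|∇u|² − τ∫ F₊(u)` -/
def energyPlusTau (Ω : Set (Euc N)) (f : ℝ → ℝ) (τ : ℝ) (u : Euc N → ℝ) : ℝ :=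
  (1/2) * gradSq Ω u - τ * ∫ x in Ω, primitive (fplus f) (u x)

/-- `Ẽ(u) = ½∫|∇u|² − ∫ F(u)` -/
def energyTilde (Ω : Set (Euc N)) (f : ℝ → ℝ) (u : Euc N → ℝ) : ℝ :=
  (1/2) * gradSq Ω u - ∫ x in Ω, primitive f (u x)

/-- `Ẽ_τ(u) = ½∫|∇u|² − τ∫ F(u)` -/
def energyTildeTau (Ω : Set (Euc N)) (f : ℝ → ℝ) (τ : ℝ) (u : Euc N → ℝ) : ℝ :=
  (1/2) * gradSq Ω u - τ * ∫ x in Ω, primitive f (u x)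

/-- Condition (f₁): `f` continuous, `f(0)=0`, with mass-supercritical,
Sobolev-subcritical Ambrosetti–Rabinowitz bounds `0 < αF(t) ≤ f(t)t ≤ βF(t)`. -/
structure Cond_f1 (N : ℕ) (f : ℝ → ℝ) (α β : ℝ) : Prop where
  cont : Continuous f
  f0 : f 0 = 0
  hα : 2 + 4 / (N : ℝ) < α
  hαβ : α ≤ β
  hβ : β < 2 * N / ((N : ℝ) - 2)
  AR : ∀ t : ℝ, t ≠ 0 →
    0 < α * primitive f t ∧ α * primitive f t ≤ f t * t ∧ f t * t ≤ β * primitive f t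

/-- `(λ, u)` is a normalized solution of `−Δu + λu = f(u)` in `Ω`, `u ∈ H¹₀(Ω)`,
`∫_Ω u² = c`. -/
structure NormalizedSolution (Ω : Set (Euc N)) (f : ℝ → ℝ) (c lam : ℝ)
    (u : Euc N → ℝ) : Prop where
  mem : MemH01 Ω u
  eqn : ∀ x ∈ Ω, - lap u x + lam * u x = f (u x)
  mass : ∫ x in Ω, (u x) ^ 2 = c

/-- normalized ground state: a normalized solution minimizing `Ẽ` among all
normalized solutions with mass `c`. -/
def IsGroundState (Ω : Set (Euc N)) (f : ℝ → ℝ) (c lam : ℝ) (u : Euc N → ℝ) : Prop :=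
  NormalizedSolution Ω f c lam u ∧
    ∀ lam' u', NormalizedSolution Ω f c lam' u' → energyTilde Ω f u ≤ energyTilde Ω f u'

/-- `S` is the optimal Sobolev constant for `W^{1,p*} ↪ L^p`, `p* = Np/(N+p)`:
the largest constant with `S (∫|u|^p)^{p*/p} ≤ ∫|∇u|^{p*}`. -/
def IsSobolevConst (N : ℕ) (p S : ℝ) : Prop :=
  IsGreatest {S' : ℝ | 0 ≤ S' ∧ ∀ u : Euc N → ℝ, ContDiff ℝ (⊤ : ℕ∞) u → HasCompactSupport u →
    S' * (∫ x, |u x| ^ p) ^ ((N * p / (N + p)) / p) ≤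
      ∫ x, ‖gradient u x‖ ^ (N * p / ((N : ℝ) + p))} S

/-- `C` is the optimal Gagliardo–Nirenberg constant `C_{N,r}`. -/
def IsGNConst (N : ℕ) (r C : ℝ) : Prop :=
  IsLeast {C' : ℝ | 0 ≤ C' ∧ ∀ u : Euc N → ℝ, ContDiff ℝ (⊤ : ℕ∞) u → HasCompactSupport u →
    ∫ x, |u x| ^ r ≤ C' ^ r * (∫ x, (u x) ^ 2) ^ ((2 * r - N * (r - 2)) / 4) *
      (∫ x, ‖gradient u x‖ ^ 2) ^ (N * (r - 2) / 4)} C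

/-- `G = {u ∈ S_c⁺ : ∫|∇u|² > (N/2)∫f₊(u)u⁺ − N∫F₊(u)}` -/
def Gset (Ω : Set (Euc N)) (f : ℝ → ℝ) (c : ℝ) : Set (Euc N → ℝ) :=
  {u | u ∈ ScPlus Ω c ∧
    ((N : ℝ) / 2) * (∫ x in Ω, fplus f (u x) * pPart u x)
      - (N : ℝ) * (∫ x in Ω, primitive (fplus f) (u x)) < gradSq Ω u}

/-- `∂G`: the subset of `S_c⁺` where equality holds. -/
def GsetBoundary (Ω : Set (Euc N)) (f : ℝ → ℝ) (c : ℝ) : Set (Euc N → ℝ) :=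
  {u | u ∈ ScPlus Ω c ∧
    gradSq Ω u = ((N : ℝ) / 2) * (∫ x in Ω, fplus f (u x) * pPart u x)
      - (N : ℝ) * (∫ x in Ω, primitive (fplus f) (u x))}

/-- `Ḡ`: the closed region (inequality `≥`). -/
def GsetBar (Ω : Set (Euc N)) (f : ℝ → ℝ) (c : ℝ) : Set (Euc N → ℝ) :=
  {u | u ∈ ScPlus Ω c ∧
    ((N : ℝ) / 2) * (∫ x in Ω, fplus f (u x) * pPart u x)
      - (N : ℝ) * (∫ x in Ω, primitive (fplus f) (u x)) ≤ gradSq Ω u}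

/-- dilation `u^t(x) = t^{N/2} u(tx)` -/
def scale (T : ℝ) (u : Euc N → ℝ) : Euc N → ℝ := fun x => T ^ ((N : ℝ) / 2) * u (T • x)

/-- `g_{1,u} = ∫|∇u|² / ∫(|u⁺|^α + |u⁺|^β)` -/
def g1 (Ω : Set (Euc N)) (α β : ℝ) (u : Euc N → ℝ) : ℝ :=
  gradSq Ω u / (∫ x in Ω, (pPart u x ^ α + pPart u x ^ β))

/-- `g_{2,u} = ½∫|∇u|²` -/
def g2 (Ω : Set (Euc N)) (u : Euc N → ℝ) : ℝ := (1/2) * gradSq Ω u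

/-- The defining equation of the constant `C₁`. -/
def C1eq (N : ℕ) (Ωvol : ℝ) (α β ζ Sα Sβ C1 : ℝ) : Prop :=
  ((β - 2) * (N : ℝ) * ζ / 2) *
    ((Sα⁻¹ * Ωvol ^ ((2 - (N : ℝ) * α / ((N : ℝ) + α)) / 2)) ^
        (α / ((N : ℝ) * α / ((N : ℝ) + α))) * C1 ^ (α / 2 - 1)
      + (Sβ⁻¹ * Ωvol ^ ((2 - (N : ℝ) * β / ((N : ℝ) + β)) / 2)) ^
        (β / ((N : ℝ) * β / ((N : ℝ) + β))) * C1 ^ (β / 2 - 1)) = 1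

/-- The smallness condition
`c < sup_{u ∈ S_c⁺} min{c(g_{1,u}), (1/2 − 2/(N(α−2))) C₁ g_{2,u}⁻¹}`,
phrased as: some `u ∈ S_c⁺` realizes a value exceeding `c`. -/
def SmallMass (Ω : Set (Euc N)) (α β ζ C1 c : ℝ) : Prop :=
  ∃ u ∈ ScPlus Ω c, ∃ cg1 : ℝ, 0 < cg1 ∧
    ((β - 2) * ζ * (N : ℝ) / 2) * (cg1 ^ ((α - 2) / 2) + cg1 ^ ((β - 2) / 2)) = g1 Ω α β u ∧
    c < min cg1 ((1/2 - 2 / ((N : ℝ) * (α - 2))) * C1 / g2 Ω u)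

/-- Continuous paths in `S_c⁺` joining `u1` to `u2`. -/
def pathsSet (Ω : Set (Euc N)) (c : ℝ) (u1 u2 : Euc N → ℝ) : Set (ℝ → Euc N → ℝ) :=
  {γ | ContinuousOn γ (Icc (0:ℝ) 1) ∧ (∀ t ∈ Icc (0:ℝ) 1, γ t ∈ ScPlus Ω c) ∧
    γ 0 = u1 ∧ γ 1 = u2}

/-- mountain pass level `inf_{γ} sup_{t∈[0,1]} Φ(γ(t))` over paths in `S_c⁺`. -/
def mpLevel (Ω : Set (Euc N)) (c : ℝ) (u1 u2 : Euc N → ℝ)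
    (Φ : (Euc N → ℝ) → ℝ) : ℝ :=
  sInf ((fun γ => sSup ((fun t => Φ (γ t)) '' Icc (0:ℝ) 1)) '' pathsSet Ω c u1 u2)

/-- `(θ, e)` is a Dirichlet eigenpair of `−Δ` on `Ω`. -/
def IsDirichletEigenpair (Ω : Set (Euc N)) (θ : ℝ) (e : Euc N → ℝ) : Prop :=
  MemH01 Ω e ∧ e ≠ 0 ∧ ∀ x ∈ Ω, - lap e x = θ * e x

def IsDirichletEigenvalue (Ω : Set (Euc N)) (θ : ℝ) : Prop :=
  ∃ e, IsDirichletEigenpair Ω θ e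

/-- `θ 1 < θ 2 < ⋯` enumerates the distinct Dirichlet eigenvalues of `−Δ` on `Ω`. -/
structure EigenEnum (Ω : Set (Euc N)) (θ : ℕ → ℝ) : Prop where
  pos : 0 < θ 1
  mono : StrictMonoOn θ (Ici 1)
  eig : ∀ i, 1 ≤ i → IsDirichletEigenvalue Ω (θ i)
  complete : ∀ μ, IsDirichletEigenvalue Ω μ → ∃ i, 1 ≤ i ∧ θ i = μ

/-- `V_i`: span of the eigenfunctions with eigenvalue `≤ θ_i`. -/
def Vspan (Ω : Set (Euc N)) (θ : ℕ → ℝ) (i : ℕ) : Set (Euc N → ℝ) :=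
  ↑(Submodule.span ℝ {e : Euc N → ℝ | ∃ j, 1 ≤ j ∧ j ≤ i ∧ IsDirichletEigenpair Ω (θ j) e})

/-- `B_i = {v ∈ V_{i−1}^⊥ ∩ S_c : ∫|∇v|² = ρ_i}` (orthogonality in `L²(Ω)`). -/
def Bset (Ω : Set (Euc N)) (θ : ℕ → ℝ) (c ρi : ℝ) (i : ℕ) : Set (Euc N → ℝ) :=
  {v | v ∈ Sc Ω c ∧ (∀ w ∈ Vspan Ω θ (i - 1), ∫ x in Ω, v x * w x = 0) ∧
    gradSq Ω v = ρi}

/-- The class `Γ_{i,c}` of continuous maps `γ : [0,1] × (S_c ∩ V_i) → S_c`,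
odd in `u`, with `γ(0,u) = u` and `γ(1,u) = ũ = scale T u`. -/
def GammaLink (Ω : Set (Euc N)) (c : ℝ) (Vi : Set (Euc N → ℝ)) (T : ℝ) :
    Set (ℝ × (Euc N → ℝ) → Euc N → ℝ) :=
  {γ | ContinuousOn γ (Icc (0:ℝ) 1 ×ˢ (Sc Ω c ∩ Vi)) ∧
    (∀ p ∈ Icc (0:ℝ) 1 ×ˢ (Sc Ω c ∩ Vi), γ p ∈ Sc Ω c) ∧
    (∀ t ∈ Icc (0:ℝ) 1, ∀ u ∈ Sc Ω c ∩ Vi, γ (t, -u) = - γ (t, u)) ∧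
    (∀ u ∈ Sc Ω c ∩ Vi, γ (0, u) = u ∧ γ (1, u) = scale T u)}

/-- The minimax value `ν_{i,τ,c} = inf_{γ ∈ Γ_{i,c}} sup Φ ∘ γ`
(with energy functional `Φ = Ẽ_τ`). -/
def nuLevel (Ω : Set (Euc N)) (c : ℝ) (Vi : Set (Euc N → ℝ)) (T : ℝ)
    (Φ : (Euc N → ℝ) → ℝ) : ℝ :=
  sInf ((fun γ => sSup ((fun p => Φ (γ p)) '' (Icc (0:ℝ) 1 ×ˢ (Sc Ω c ∩ Vi)))) ''
    GammaLink Ω c Vi T)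

/-- The defining equation of `ρ_i` (statements with general `f`):
`ζ(C_α^α θ_i^{(N(α−2)−2α)/4} ρ^{(α−2)/2} + C_β^β θ_i^{(N(β−2)−2β)/4} ρ^{(β−2)/2}) = 1/2`. -/
def rhoEq (N : ℕ) (α β ζ Cα Cβ θi ρ : ℝ) : Prop :=
  ζ * (Cα ^ α * θi ^ (((N : ℝ) * (α - 2) - 2 * α) / 4) * ρ ^ ((α - 2) / 2)
    + Cβ ^ β * θi ^ (((N : ℝ) * (β - 2) - 2 * β) / 4) * ρ ^ ((β - 2) / 2)) = 1/2


/-- **Lemma 3.3**: the mountain pass levels satisfy `lim_{τ→1⁻} m_τ = m₁`. -/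
theorem statement11
    {N : ℕ} (hN : 3 ≤ N)
    (Ω : Set (Euc N)) (hΩo : IsOpen Ω) (hΩb : Bornology.IsBounded Ω)
    (hΩs : StarConvex ℝ (0 : Euc N) Ω)
    (f : ℝ → ℝ) (α β : ℝ) (hf : Cond_f1 N f α β)
    (c : ℝ) (hc : 0 < c)
    (uc : Euc N → ℝ)
    (huc : uc ∈ Gset Ω f c ∧ ∀ w ∈ Gset Ω f c, energyPlus Ω f uc ≤ energyPlus Ω f w)
    (v : Euc N → ℝ) (hv : v ∈ ScPlus Ω c \ Gset Ω f c)
    (hvneg : ∀ τ ∈ Icc (1/2 : ℝ) 1,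
      energyPlusTau Ω f τ v < 0 ∧ 0 < energyPlusTau Ω f τ uc)
    (hmp : ∀ τ ∈ Icc (1/2 : ℝ) 1,
      max (energyPlusTau Ω f τ uc) (energyPlusTau Ω f τ v)
        < mpLevel Ω c uc v (energyPlusTau Ω f τ)) :
    Tendsto (fun τ => mpLevel Ω c uc v (energyPlusTau Ω f τ))
      (nhdsWithin 1 (Iio 1)) (nhds (mpLevel Ω c uc v (energyPlusTau Ω f 1))) := by
  classical
  set E : ℝ → (Euc N → ℝ) → ℝ := energyPlusTau Ω f with hEdef
  set P : Set (ℝ → Euc N → ℝ) := pathsSet Ω c uc v with hPdef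
  set S : ℝ → (ℝ → Euc N → ℝ) → ℝ :=
    fun τ γ => sSup ((fun t => E τ (γ t)) '' Icc (0:ℝ) 1) with hSdef
  have hm : ∀ τ : ℝ, mpLevel Ω c uc v (E τ) = sInf ((fun γ => S τ γ) '' P) :=
    fun τ => rfl
  -- α > 2
  have hα2 : (2:ℝ) < α := by
    have h4 : (0:ℝ) ≤ 4 / (N:ℝ) := by positivity
    linarith [hf.hα]
  -- F₊ ≥ 0
  have hF : ∀ t : ℝ, 0 ≤ primitive (fplus f) t := by
    intro t
    rcases le_or_gt t 0 with ht | ht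
    · have heq : primitive (fplus f) t = ∫ s in (0:ℝ)..t, (0:ℝ) := by
        apply intervalIntegral.integral_congr
        intro s hs
        rw [Set.uIcc_of_ge ht] at hs
        have hs0 : s ≤ 0 := hs.2
        show (if 0 ≤ s then f s else 0) = 0
        split_ifs with h
        · have : s = 0 := le_antisymm hs0 h
          rw [this, hf.f0]
        · rfl
      rw [heq]
      simp
    · have heq : primitive (fplus f) t = primitive f t := by
        apply intervalIntegral.integral_congr
        intro s hs
        rw [Set.uIcc_of_le ht.le] at hs
        exact if_pos hs.1
      rw [heq]
      have h1 := (hf.AR t ht.ne').1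
      nlinarith [h1, hα2]
  have hI : ∀ u : Euc N → ℝ, 0 ≤ ∫ x in Ω, primitive (fplus f) (u x) :=
    fun u => integral_nonneg fun x => hF (u x)
  -- E 1 ≤ E τ for τ ≤ 1
  have hE1le : ∀ τ ∈ Icc (1/2:ℝ) 1, ∀ u, E 1 u ≤ E τ u := by
    intro τ hτ u
    show energyPlusTau Ω f 1 u ≤ energyPlusTau Ω f τ u
    unfold energyPlusTau
    have h1 := mul_le_mul_of_nonneg_right hτ.2 (hI u)
    linarith
  -- convexity identity
  have hconv : ∀ (τ : ℝ) u, E τ u = (2*τ-1) * E 1 u + (2-2*τ) * E (1/2) u := by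
    intro τ u
    show energyPlusTau Ω f τ u
      = (2*τ-1) * energyPlusTau Ω f 1 u + (2-2*τ) * energyPlusTau Ω f (1/2) u
    unfold energyPlusTau
    ring
  -- positivity of mountain-pass levels
  have hmpos : ∀ τ ∈ Icc (1/2:ℝ) 1, 0 < mpLevel Ω c uc v (E τ) := by
    intro τ hτ
    calc (0:ℝ) < E τ uc := (hvneg τ hτ).2
    _ ≤ max (E τ uc) (E τ v) := le_max_left _ _
    _ < _ := hmp τ hτ
  -- P is nonempty
  have hPne : P.Nonempty := by
    by_contra h
    rw [Set.not_nonempty_iff_eq_empty] at h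
    have h1 := hmpos 1 (by norm_num)
    rw [hm 1, h, Set.image_empty, Real.sInf_empty] at h1
    exact lt_irrefl _ h1
  -- the sets of sups are bounded below
  have hDbb : ∀ τ ∈ Icc (1/2:ℝ) 1, BddBelow ((fun γ => S τ γ) '' P) := by
    intro τ hτ
    by_contra h
    have h0 : sInf ((fun γ => S τ γ) '' P) = 0 := Real.sInf_of_not_bddBelow h
    have h1 := hmpos τ hτ
    rw [hm τ, h0] at h1
    exact lt_irrefl _ h1
  have hSmem : ∀ τ ∈ Icc (1/2:ℝ) 1, ∀ γ ∈ P, mpLevel Ω c uc v (E τ) ≤ S τ γ := by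
    intro τ hτ γ hγ
    rw [hm τ]
    exact csInf_le (hDbb τ hτ) ⟨γ, hγ, rfl⟩
  -- each image along a path is bounded above
  have hBA : ∀ τ ∈ Icc (1/2:ℝ) 1, ∀ γ ∈ P,
      BddAbove ((fun t => E τ (γ t)) '' Icc (0:ℝ) 1) := by
    intro τ hτ γ hγ
    by_contra h
    have h0 : S τ γ = 0 := Real.sSup_of_not_bddAbove h
    have h1 := hSmem τ hτ γ hγ
    have h2 := hmpos τ hτ
    rw [h0] at h1
    linarith
  have hIccne : (Icc (0:ℝ) 1).Nonempty := nonempty_Icc.2 (by norm_num)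
  -- lower bound: m 1 ≤ m τ
  have hlow : ∀ τ ∈ Icc (1/2:ℝ) 1,
      mpLevel Ω c uc v (E 1) ≤ mpLevel Ω c uc v (E τ) := by
    intro τ hτ
    rw [hm τ]
    apply le_csInf (hPne.image _)
    rintro b ⟨γ, hγ, rfl⟩
    have hS1 : S 1 γ ≤ S τ γ := by
      apply csSup_le (hIccne.image _)
      rintro b ⟨t, ht, rfl⟩
      exact le_trans (hE1le τ hτ _) (le_csSup (hBA τ hτ γ hγ) ⟨t, ht, rfl⟩)
    exact le_trans (hSmem 1 (by norm_num) γ hγ) hS1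
  -- now prove the limit
  rw [Metric.tendsto_nhds]
  intro ε hε
  -- choose a near-optimal path for τ = 1
  have hlt : sInf ((fun γ => S 1 γ) '' P) < mpLevel Ω c uc v (E 1) + ε := by
    rw [← hm 1]; linarith
  obtain ⟨b, ⟨γ, hγ, rfl⟩, hb⟩ := exists_lt_of_csInf_lt (hPne.image _) hlt
  -- the interpolation bound tends to S 1 γ
  have hcont : Tendsto (fun τ : ℝ => (2*τ-1) * S 1 γ + (2-2*τ) * S (1/2) γ)
      (nhdsWithin 1 (Iio 1)) (nhds (S 1 γ)) := by
    have hc : Continuous fun τ : ℝ => (2*τ-1) * S 1 γ + (2-2*τ) * S (1/2) γ := by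
      fun_prop
    have h := hc.tendsto 1
    norm_num at h
    exact h.mono_left nhdsWithin_le_nhds
  have hev1 : ∀ᶠ τ in nhdsWithin (1:ℝ) (Iio 1),
      (2*τ-1) * S 1 γ + (2-2*τ) * S (1/2) γ < mpLevel Ω c uc v (E 1) + ε :=
    hcont.eventually_lt_const hb
  have hev2 : ∀ᶠ τ in nhdsWithin (1:ℝ) (Iio 1), τ ∈ Ioo (1/2:ℝ) 1 :=
    Ioo_mem_nhdsLT_of_mem (by norm_num : (1:ℝ) ∈ Ioc (1/2:ℝ) 1)
  filter_upwards [hev1, hev2] with τ hφ hτIoo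
  have hτIcc : τ ∈ Icc (1/2:ℝ) 1 := ⟨hτIoo.1.le, hτIoo.2.le⟩
  -- upper bound: m τ ≤ interpolation value
  have hup : mpLevel Ω c uc v (E τ) ≤ (2*τ-1) * S 1 γ + (2-2*τ) * S (1/2) γ := by
    refine le_trans (hSmem τ hτIcc γ hγ) ?_
    apply csSup_le (hIccne.image _)
    rintro b ⟨t, ht, rfl⟩
    have h1 : E 1 (γ t) ≤ S 1 γ := le_csSup (hBA 1 (by norm_num) γ hγ) ⟨t, ht, rfl⟩
    have h2 : E (1/2) (γ t) ≤ S (1/2) γ :=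
      le_csSup (hBA (1/2) (by norm_num) γ hγ) ⟨t, ht, rfl⟩
    show E τ (γ t) ≤ _
    rw [hconv τ (γ t)]
    have c1 : (0:ℝ) ≤ 2*τ-1 := by linarith [hτIoo.1]
    have c2 : (0:ℝ) ≤ 2-2*τ := by linarith [hτIoo.2]
    exact add_le_add (mul_le_mul_of_nonneg_left h1 c1) (mul_le_mul_of_nonneg_left h2 c2)
  have hlo := hlow τ hτIcc
  rw [Real.dist_eq, abs_of_nonneg (by linarith : (0:ℝ) ≤ mpLevel Ω c uc v (E τ) - mpLevel Ω c uc v (E 1))]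
  linarith

end
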